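/- Let P be a finite set of at least four points in ℝ² such that (i) no two distinct lines determined by pairs of points of P are parallel, and (ii) for every line ℓ determined by a pair of points of P, at least two points of P do not lie on ℓ. Then there exist two lines, each determined by a pair of points of P, whose intersection point does not belong to P. -/
import Mathlib


noncomputable section

/-- Points of the real plane. -/
abbrev Pt := ℝ × ℝ

/-- Lines are affine subspaces of the plane (we restrict to 1-dimensional ones via `IsLine`). -/
abbrev Ln := AffineSubspace ℝ Pt

/-- A line is a 1-dimensional affine subspace of `ℝ²`. -/
def IsLine (l : Ln) : Prop := Module.finrank ℝ l.direction = 1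

/-- The line through two (distinct) points. -/
def lineThrough (p q : Pt) : Ln := affineSpan ℝ {p, q}

/-- The iterated point–line construction: `P 1` is a set of four points in general position,
`L 1` is the set of lines through pairs of them; `P (k+1)` adds all intersection points of
pairs of distinct lines of `L k`, and `L (k+1)` adds all lines through pairs of distinct
points of `P (k+1)`.  No two distinct lines of any `L k` are parallel. -/
structure IterConfig where
  P : ℕ → Set Pt
  L : ℕ → Set Ln
  card_P1 : (P 1).ncard = 4
  genPos : ∀ p ∈ P 1, ∀ q ∈ P 1, ∀ r ∈ P 1,
    p ≠ q → p ≠ r → q ≠ r → ¬ Collinear ℝ ({p, q, r} : Set Pt)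
  L1_def : L 1 = {l | ∃ p ∈ P 1, ∃ q ∈ P 1, p ≠ q ∧ l = lineThrough p q}
  P_succ : ∀ k, 1 ≤ k →
    P (k + 1) = P k ∪ {x | ∃ l ∈ L k, ∃ l' ∈ L k, l ≠ l' ∧ x ∈ l ∧ x ∈ l'}
  L_succ : ∀ k, 1 ≤ k →
    L (k + 1) = L k ∪ {l | ∃ p ∈ P (k + 1), ∃ q ∈ P (k + 1), p ≠ q ∧ l = lineThrough p q}
  noParallel : ∀ k, 1 ≤ k → ∀ l ∈ L k, ∀ l' ∈ L k, l ≠ l' →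
    AffineSubspace.direction l ≠ AffineSubspace.direction l'

/-- `n k`, the number of points at the beginning of stage `k`. -/
def nPts (C : IterConfig) (k : ℕ) : ℕ := (C.P k).ncard

/-- `m k`, the number of lines at the beginning of stage `k`. -/
def nLns (C : IterConfig) (k : ℕ) : ℕ := (C.L k).ncard

/-- `d k p`, the degree of a point: the number of lines of `L k` incident to `p`. -/
def ptDeg (C : IterConfig) (k : ℕ) (p : Pt) : ℕ := {l | l ∈ C.L k ∧ p ∈ l}.ncard

/-- `δ k`, the minimum degree of a point of `P k`. -/
def minDeg (C : IterConfig) (k : ℕ) : ℕ := sInf {d | ∃ p ∈ C.P k, d = ptDeg C k p}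

/-- A line is determined by a point set if it passes through two distinct points of it. -/
def DeterminedBy (P : Set Pt) (l : Ln) : Prop :=
  ∃ p ∈ P, ∃ q ∈ P, p ≠ q ∧ l = lineThrough p q

namespace Aux

def cross (u v : Pt) : ℝ := u.1 * v.2 - u.2 * v.1
def dotp (u v : Pt) : ℝ := u.1 * v.1 + u.2 * v.2
def Col (a b c : Pt) : Prop := cross (b - a) (c - a) = 0

lemma col_def (a b c : Pt) :
    Col a b c ↔ (b.1-a.1)*(c.2-a.2) - (b.2-a.2)*(c.1-a.1) = 0 := by
  simp [Col, cross]

lemma col_aba (a b : Pt) : Col a b a := by rw [col_def]; ring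
lemma col_abb (a b : Pt) : Col a b b := by rw [col_def]; ring

lemma col_132 {a b c : Pt} (h : Col a b c) : Col a c b := by
  rw [col_def] at *; linear_combination -h
lemma col_213 {a b c : Pt} (h : Col a b c) : Col b a c := by
  rw [col_def] at *; linear_combination -h
lemma col_231 {a b c : Pt} (h : Col a b c) : Col b c a := by
  rw [col_def] at *; linear_combination h
lemma col_312 {a b c : Pt} (h : Col a b c) : Col c a b := by
  rw [col_def] at *; linear_combination h
lemma col_321 {a b c : Pt} (h : Col a b c) : Col c b a := by
  rw [col_def] at *; linear_combination -h

lemma pt_ne_iff {a b : Pt} : a ≠ b ↔ (a.1 ≠ b.1 ∨ a.2 ≠ b.2) := by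
  rw [Ne, Prod.ext_iff]; tauto

lemma col_trans {a b c d : Pt} (hab : a ≠ b) (h1 : Col a b c) (h2 : Col a b d) :
    Col a c d := by
  rw [col_def] at *
  have e1 : ((c.1-a.1)*(d.2-a.2) - (c.2-a.2)*(d.1-a.1)) * (b.1-a.1) = 0 := by
    linear_combination (c.1-a.1)*h2 - (d.1-a.1)*h1
  have e2 : ((c.1-a.1)*(d.2-a.2) - (c.2-a.2)*(d.1-a.1)) * (b.2-a.2) = 0 := by
    linear_combination (c.2-a.2)*h2 - (d.2-a.2)*h1
  rcases pt_ne_iff.mp hab with h | h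
  · exact (mul_eq_zero.mp e1).resolve_right (by intro hc; exact h (by linarith))
  · exact (mul_eq_zero.mp e2).resolve_right (by intro hc; exact h (by linarith))

lemma par {v x : Pt} (hv : v ≠ 0) (h : cross v x = 0) : ∃ s : ℝ, x = s • v := by
  rcases pt_ne_iff.mp hv with h1 | h1 <;> simp only [Prod.fst_zero, Prod.snd_zero] at h1
  · refine ⟨x.1 / v.1, ?_⟩
    have : x.2 = x.1 / v.1 * v.2 := by
      field_simp
      simp only [cross] at h; linarith
    refine Prod.ext ?_ ?_ <;> simp [this]
    field_simp
  · refine ⟨x.2 / v.2, ?_⟩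
    have : x.1 = x.2 / v.2 * v.1 := by
      field_simp
      simp only [cross] at h; linarith
    refine Prod.ext ?_ ?_ <;> simp [this]
    field_simp

lemma mem_lineThrough {a b x : Pt} (hab : a ≠ b) :
    x ∈ lineThrough a b ↔ Col a b x := by
  have hv : b - a ≠ 0 := sub_ne_zero_of_ne hab.symm
  constructor
  · intro hx
    have h2 : (x - a) +ᵥ a ∈ lineThrough a b := by
      simpa [vadd_eq_add, sub_add_cancel] using hx
    rw [lineThrough, vadd_left_mem_affineSpan_pair] at h2
    obtain ⟨r, hr⟩ := h2
    have : x - a = r • (b - a) := by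
      rw [← hr]; simp [vsub_eq_sub]
    rw [Col, this]
    simp [cross]; ring
  · intro hc
    obtain ⟨s, hs⟩ := par hv hc
    have : x = s • (b -ᵥ a) +ᵥ a := by
      simp only [vsub_eq_sub, vadd_eq_add, ← hs]; abel
    rw [this, lineThrough]
    exact vadd_left_mem_affineSpan_pair.mpr ⟨s, rfl⟩

lemma dir_eq {a b c d : Pt} (hab : a ≠ b) (hcd : c ≠ d)
    (hpar : cross (b - a) (d - c) = 0) :
    (lineThrough a b).direction = (lineThrough c d).direction := by
  have hv : b - a ≠ 0 := sub_ne_zero_of_ne hab.symm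
  obtain ⟨s, hs⟩ := par hv hpar
  have hs0 : s ≠ 0 := by
    intro h; rw [h, zero_smul] at hs
    exact hcd (sub_eq_zero.mp hs).symm
  rw [lineThrough, lineThrough, direction_affineSpan, direction_affineSpan,
    vectorSpan_pair, vectorSpan_pair]
  have hcd' : c -ᵥ d = s • (a -ᵥ b) := by
    simp only [vsub_eq_sub]
    have : c - d = -(d - c) := by abel
    rw [this, hs]
    have : a - b = -(b - a) := by abel
    rw [this]; module
  ext x
  simp only [Submodule.mem_span_singleton]
  constructor
  · rintro ⟨t, rfl⟩
    refine ⟨t / s, ?_⟩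
    rw [hcd', smul_smul, div_mul_cancel₀ _ hs0]
  · rintro ⟨t, rfl⟩
    exact ⟨t * s, by rw [hcd']; module⟩

lemma inter_exists {a b c d : Pt} (hD : cross (b - a) (d - c) ≠ 0) :
    ∃ x : Pt, Col a b x ∧ Col c d x := by
  obtain ⟨a1, a2⟩ := a; obtain ⟨b1, b2⟩ := b
  obtain ⟨c1, c2⟩ := c; obtain ⟨d1, d2⟩ := d
  simp only [cross, Prod.fst_sub, Prod.snd_sub] at hD
  set u1 := b1 - a1; set u2 := b2 - a2; set v1 := d1 - c1; set v2 := d2 - c2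
  set e1 := u1 * a2 - u2 * a1; set e2 := v1 * c2 - v2 * c1
  set D := u1 * v2 - u2 * v1 with hDdef
  have hD' : D ≠ 0 := hD
  refine ⟨((v1*e1 - u1*e2)/D, (v2*e1 - u2*e2)/D), ?_, ?_⟩ <;>
    rw [col_def] <;> field_simp <;> ring

end Aux

namespace Aux

lemma sq_sub_le {x y : ℝ} (h1 : 0 ≤ x * y) (h2 : x ^ 2 ≤ y ^ 2) :
    (x - y) ^ 2 ≤ y ^ 2 := by
  rcases le_total x 0 with hx | hx <;> rcases le_total y 0 with hy | hy
  · nlinarith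
  · nlinarith [mul_nonpos_of_nonpos_of_nonneg hx hy, sq_nonneg x, sq_nonneg y]
  · nlinarith [mul_nonpos_of_nonneg_of_nonpos hx hy, sq_nonneg x, sq_nonneg y]
  · nlinarith

lemma pig (x y z : ℝ) :
    (0 ≤ x*y ∧ x^2 ≤ y^2) ∨ (0 ≤ y*x ∧ y^2 ≤ x^2) ∨ (0 ≤ x*z ∧ x^2 ≤ z^2) ∨
    (0 ≤ z*x ∧ z^2 ≤ x^2) ∨ (0 ≤ y*z ∧ y^2 ≤ z^2) ∨ (0 ≤ z*y ∧ z^2 ≤ y^2) := by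
  rcases le_or_gt 0 (x*y) with h1 | h1
  · rcases le_total (x^2) (y^2) with h2 | h2
    · exact Or.inl ⟨h1, h2⟩
    · exact Or.inr (Or.inl ⟨by linarith [mul_comm x y], h2⟩)
  rcases le_or_gt 0 (x*z) with h3 | h3
  · rcases le_total (x^2) (z^2) with h2 | h2
    · exact Or.inr (Or.inr (Or.inl ⟨h3, h2⟩))
    · exact Or.inr (Or.inr (Or.inr (Or.inl ⟨by linarith [mul_comm x z], h2⟩)))
  have h4 : 0 ≤ y*z := by
    have hp := mul_pos (neg_pos.2 h1) (neg_pos.2 h3)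
    nlinarith [sq_nonneg x]
  rcases le_total (y^2) (z^2) with h2 | h2
  · exact Or.inr (Or.inr (Or.inr (Or.inr (Or.inl ⟨h4, h2⟩))))
  · exact Or.inr (Or.inr (Or.inr (Or.inr (Or.inr ⟨by linarith [mul_comm y z], h2⟩))))

end Aux

namespace Aux

lemma core_ineq (A Dd C NV VM MM X Y : ℝ)
    (idlag : C^2 + VM^2 = NV * MM) (eDd : Dd * NV = Y^2 + C^2)
    (e5 : A^2 * NV * NV = (X-Y)^2 * C^2) (e6 : C^2 * Dd * NV = Y^2 * C^2 + C^2 * C^2)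
    (hs1 : 0 ≤ X * Y) (hs2 : X^2 ≤ Y^2) (hMM : 0 ≤ MM) (hC : 0 < C^2) :
    A^2 / Dd < C^2 / NV := by
  have hNV : 0 < NV := by nlinarith [sq_nonneg VM]
  have hDd : 0 < Dd := by nlinarith [sq_nonneg Y]
  have hXY : (X - Y)^2 ≤ Y^2 := sq_sub_le hs1 hs2
  rw [div_lt_div_iff₀ hDd hNV]
  have e7 : A^2 * NV * NV < C^2 * Dd * NV := by
    have hint := mul_le_mul_of_nonneg_right hXY (le_of_lt hC)
    have hint2 := mul_pos hC hC
    linarith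
  exact lt_of_mul_lt_mul_right e7 (le_of_lt hNV)

set_option maxHeartbeats 1000000 in
lemma key {p a b q1 q2 : Pt} (hab : a ≠ b) (hnp : ¬ Col a b p)
    (h1 : Col a b q1) (h2 : Col a b q2) (hq12 : q1 ≠ q2)
    (hs1 : 0 ≤ dotp (q1 - p) (b - a) * dotp (q2 - p) (b - a))
    (hs2 : (dotp (q1 - p) (b - a))^2 ≤ (dotp (q2 - p) (b - a))^2) :
    p ≠ q2 ∧ ¬ Col p q2 q1 ∧
      (cross (q2 - p) (q1 - p))^2 / dotp (q2 - p) (q2 - p)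
        < (cross (b - a) (p - a))^2 / dotp (b - a) (b - a) := by
  have hv : b - a ≠ 0 := sub_ne_zero_of_ne hab.symm
  obtain ⟨t1, ht1⟩ := par hv h1
  obtain ⟨t2, ht2⟩ := par hv h2
  have ht12 : t1 ≠ t2 := by
    intro h
    apply hq12
    have h' : q1 - a = q2 - a := by rw [ht1, ht2, h]
    exact sub_left_injective h'
  have hpne : p ≠ q2 := by
    intro h; exact hnp (h ▸ h2)
  obtain ⟨a1, a2⟩ := a; obtain ⟨b1, b2⟩ := b; obtain ⟨p1, p2⟩ := p
  obtain ⟨x1, x2⟩ := q1; obtain ⟨y1, y2⟩ := q2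
  rw [Prod.ext_iff] at ht1 ht2
  simp only [Prod.fst_sub, Prod.snd_sub, Prod.smul_fst, Prod.smul_snd,
    smul_eq_mul] at ht1 ht2
  obtain ⟨e1, e2⟩ := ht1; obtain ⟨e3, e4⟩ := ht2
  have f1 : x1 = a1 + t1 * (b1 - a1) := by linarith
  have f2 : x2 = a2 + t1 * (b2 - a2) := by linarith
  have f3 : y1 = a1 + t2 * (b1 - a1) := by linarith
  have f4 : y2 = a2 + t2 * (b2 - a2) := by linarith
  subst f1 f2 f3 f4
  rw [col_def] at hnp
  simp only [col_def, cross, dotp, Prod.fst_sub, Prod.snd_sub] at hs1 hs2 ⊢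
  clear e1 e2 e3 e4 h1 h2 hv hq12
  refine ⟨hpne, ?_, ?_⟩
  · -- not collinear goal
    intro hcol
    have expand : (a1 + t2*(b1-a1) - p1) * (a2 + t1*(b2-a2) - p2)
        - (a2 + t2*(b2-a2) - p2) * (a1 + t1*(b1-a1) - p1)
        = (t1 - t2) * ((b1-a1)*(p2-a2) - (b2-a2)*(p1-a1)) := by ring
    have hz : (t1 - t2) * ((b1-a1)*(p2-a2) - (b2-a2)*(p1-a1)) = 0 := by
      rw [← expand]; linarith [hcol]
    rcases mul_eq_zero.mp hz with h | h
    · exact ht12 (by linarith)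
    · exact hnp h
  · -- strict inequality goal
    have hCpos : 0 < ((b1-a1)*(p2-a2) - (b2-a2)*(p1-a1))^2 :=
      (sq_nonneg _).lt_of_ne (Ne.symm (pow_ne_zero 2 hnp))
    refine core_ineq _ _ _ _
      ((b1-a1)*(p1-a1) + (b2-a2)*(p2-a2))
      ((p1-a1)*(p1-a1) + (p2-a2)*(p2-a2))
      (t1*((b1-a1)*(b1-a1) + (b2-a2)*(b2-a2)) - ((b1-a1)*(p1-a1) + (b2-a2)*(p2-a2)))
      (t2*((b1-a1)*(b1-a1) + (b2-a2)*(b2-a2)) - ((b1-a1)*(p1-a1) + (b2-a2)*(p2-a2)))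
      (by ring) (by ring) (by ring) (by ring)
      (by linear_combination hs1) (by linear_combination hs2)
      (add_nonneg (mul_self_nonneg _) (mul_self_nonneg _)) hCpos

end Aux

namespace Aux

variable {P : Set Pt}

lemma star
    (hnopar : ∀ l l', DeterminedBy P l → DeterminedBy P l' → l ≠ l' →
      AffineSubspace.direction l ≠ AffineSubspace.direction l')
    (H : ∀ l l', DeterminedBy P l → DeterminedBy P l' → l ≠ l' →
      ∀ x : Pt, x ∈ l → x ∈ l' → x ∈ P)
    {a b p q : Pt} (ha : a ∈ P) (hb : b ∈ P) (hab : a ≠ b) (hp : p ∈ P) (hq : q ∈ P)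
    (hpq : p ≠ q) (hnp : ¬ Col a b p) :
    ∃ z ∈ P, Col a b z ∧ Col p q z := by
  have d1 : DeterminedBy P (lineThrough a b) := ⟨a, ha, b, hb, hab, rfl⟩
  have d2 : DeterminedBy P (lineThrough p q) := ⟨p, hp, q, hq, hpq, rfl⟩
  have hne : lineThrough a b ≠ lineThrough p q := by
    intro h
    apply hnp
    have hmem : p ∈ lineThrough p q := left_mem_affineSpan_pair ℝ p q
    rw [← h, mem_lineThrough hab] at hmem
    exact hmem
  have hcr : cross (b - a) (q - p) ≠ 0 := by
    intro h
    exact hnopar _ _ d1 d2 hne (dir_eq hab hpq h)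
  obtain ⟨x, hx1, hx2⟩ := inter_exists hcr
  exact ⟨x, H _ _ d1 d2 hne x ((mem_lineThrough hab).mpr hx1)
    ((mem_lineThrough hpq).mpr hx2), hx1, hx2⟩

lemma aux3
    (hnopar : ∀ l l', DeterminedBy P l → DeterminedBy P l' → l ≠ l' →
      AffineSubspace.direction l ≠ AffineSubspace.direction l')
    (H : ∀ l l', DeterminedBy P l → DeterminedBy P l' → l ≠ l' →
      ∀ x : Pt, x ∈ l → x ∈ l' → x ∈ P)
    (hmiss : ∀ l, DeterminedBy P l → ∃ p ∈ P, ∃ q ∈ P, p ≠ q ∧ p ∉ l ∧ q ∉ l)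
    {a b q r : Pt} (ha : a ∈ P) (hb : b ∈ P) (hab : a ≠ b)
    (hno : ∀ z ∈ P, Col a b z → z = a ∨ z = b)
    (hq : q ∈ P) (hr : r ∈ P) (hqr : q ≠ r)
    (hnq : ¬ Col a b q) (hnr : ¬ Col a b r)
    (hca : Col q r a) : False := by
  have hqa : q ≠ a := fun e => hnq (by rw [e]; exact col_aba a b)
  have hra : r ≠ a := fun e => hnr (by rw [e]; exact col_aba a b)
  have hnb : ¬ Col q r b := by
    intro h
    exact hnq (col_231 (col_trans hqr hca h))
  obtain ⟨u0, hu0, v0, hv0, huv, hu0n, hv0n⟩ :=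
    hmiss (lineThrough q r) ⟨q, hq, r, hr, hqr, rfl⟩
  simp only [mem_lineThrough hqr] at hu0n hv0n
  obtain ⟨u, hu, hun, hub⟩ : ∃ u ∈ P, ¬ Col q r u ∧ u ≠ b := by
    rcases eq_or_ne u0 b with e | e
    · refine ⟨v0, hv0, hv0n, ?_⟩
      rw [← e]; exact huv.symm
    · exact ⟨u0, hu0, hu0n, e⟩
  have huq : u ≠ q := fun e => hun (by rw [e]; exact col_aba q r)
  have hur : u ≠ r := fun e => hun (by rw [e]; exact col_abb q r)
  have hqub : Col q u b := by
    obtain ⟨z, hz, hz1, hz2⟩ := star hnopar H ha hb hab hq hu huq.symm hnq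
    rcases hno z hz hz1 with rfl | rfl
    · exact absurd (col_132 (col_trans hqa (col_132 hz2) (col_132 hca))) hun
    · exact hz2
  have hrub : Col r u b := by
    obtain ⟨z, hz, hz1, hz2⟩ := star hnopar H ha hb hab hr hu hur.symm hnr
    rcases hno z hz hz1 with rfl | rfl
    · exact absurd (col_312 (col_trans hra (col_132 hz2) (col_231 hca))) hun
    · exact hz2
  exact hnb (col_231 (col_trans hub.symm (col_321 hqub) (col_321 hrub)))

lemma third
    (hnopar : ∀ l l', DeterminedBy P l → DeterminedBy P l' → l ≠ l' →
      AffineSubspace.direction l ≠ AffineSubspace.direction l')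
    (H : ∀ l l', DeterminedBy P l → DeterminedBy P l' → l ≠ l' →
      ∀ x : Pt, x ∈ l → x ∈ l' → x ∈ P)
    (hmiss : ∀ l, DeterminedBy P l → ∃ p ∈ P, ∃ q ∈ P, p ≠ q ∧ p ∉ l ∧ q ∉ l)
    {a b : Pt} (ha : a ∈ P) (hb : b ∈ P) (hab : a ≠ b) :
    ∃ c ∈ P, Col a b c ∧ c ≠ a ∧ c ≠ b := by
  by_contra hcon
  push_neg at hcon
  have hno : ∀ z ∈ P, Col a b z → z = a ∨ z = b := by
    intro z hz hcol
    rcases eq_or_ne z a with e | e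
    · exact Or.inl e
    · exact Or.inr (hcon z hz hcol e)
  obtain ⟨q, hq, r, hr, hqr, hqn, hrn⟩ :=
    hmiss (lineThrough a b) ⟨a, ha, b, hb, hab, rfl⟩
  simp only [mem_lineThrough hab] at hqn hrn
  obtain ⟨z, hz, hz1, hz2⟩ := star hnopar H ha hb hab hq hr hqr hqn
  rcases hno z hz hz1 with rfl | rfl
  · exact aux3 hnopar H hmiss ha hb hab hno hq hr hqr hqn hrn hz2
  · refine aux3 hnopar H hmiss hb ha hab.symm ?_ hq hr hqr
      (fun h => hqn (col_213 h)) (fun h => hrn (col_213 h)) hz2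
    intro z hzP hcol
    exact (hno z hzP (col_213 hcol)).symm

end Aux


open Aux in
/-- If `P` is a finite set of at least four points such that no two distinct lines
determined by `P` are parallel and every determined line misses at least two points of
`P`, then two determined lines meet at a point outside `P`. -/
theorem stmt_2 (P : Set Pt) (hfin : P.Finite) (hcard : 4 ≤ P.ncard)
    (hnopar : ∀ l l', DeterminedBy P l → DeterminedBy P l' → l ≠ l' →
      AffineSubspace.direction l ≠ AffineSubspace.direction l')
    (hmiss : ∀ l, DeterminedBy P l → ∃ p ∈ P, ∃ q ∈ P, p ≠ q ∧ p ∉ l ∧ q ∉ l) :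
    ∃ l l', DeterminedBy P l ∧ DeterminedBy P l' ∧ l ≠ l' ∧
      ∃ x : Pt, x ∈ l ∧ x ∈ l' ∧ x ∉ P := by
  by_contra hcon
  push_neg at hcon
  have H : ∀ l l', DeterminedBy P l → DeterminedBy P l' → l ≠ l' →
      ∀ x : Pt, x ∈ l → x ∈ l' → x ∈ P := fun l l' h1 h2 h3 x hx hx' =>
    hcon l l' h1 h2 h3 x hx hx'
  obtain ⟨a0, ha0, b0, hb0, hab0⟩ := (Set.one_lt_ncard hfin).mp (by omega)
  have hSne : ∃ y : Pt × Pt × Pt, y.1 ∈ P ∧ y.2.1 ∈ P ∧ y.2.2 ∈ P ∧ y.2.1 ≠ y.2.2 ∧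
      ¬ Col y.2.1 y.2.2 y.1 := by
    obtain ⟨q, hq, r, hr, hqr, hqn, hrn⟩ :=
      hmiss (lineThrough a0 b0) ⟨a0, ha0, b0, hb0, hab0, rfl⟩
    simp only [mem_lineThrough hab0] at hqn
    exact ⟨(q, a0, b0), hq, ha0, hb0, hab0, hqn⟩
  have hSfin : {y : Pt × Pt × Pt | y.1 ∈ P ∧ y.2.1 ∈ P ∧ y.2.2 ∈ P ∧ y.2.1 ≠ y.2.2 ∧
      ¬ Col y.2.1 y.2.2 y.1}.Finite :=
    (hfin.prod (hfin.prod hfin)).subset (fun y hy => ⟨hy.1, hy.2.1, hy.2.2.1⟩)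
  obtain ⟨⟨p, a, b⟩, hmem, hminim⟩ := Set.exists_min_image _
    (fun y : Pt × Pt × Pt =>
      (cross (y.2.2 - y.2.1) (y.1 - y.2.1))^2 / dotp (y.2.2 - y.2.1) (y.2.2 - y.2.1))
    hSfin hSne
  obtain ⟨hp, ha, hb, hab, hnp⟩ := hmem
  obtain ⟨c, hc, hcol, hca, hcb⟩ := third hnopar H hmiss ha hb hab
  have step : ∀ q1 q2 : Pt, q1 ∈ P → q2 ∈ P → Col a b q1 → Col a b q2 → q1 ≠ q2 →
      0 ≤ dotp (q1 - p) (b - a) * dotp (q2 - p) (b - a) →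
      (dotp (q1 - p) (b - a))^2 ≤ (dotp (q2 - p) (b - a))^2 → False := by
    intro q1 q2 hq1 hq2 hc1 hc2 hne hs1 hs2
    obtain ⟨w1, w2, w3⟩ := key hab hnp hc1 hc2 hne hs1 hs2
    have hmem2 : (q1, p, q2) ∈ {y : Pt × Pt × Pt | y.1 ∈ P ∧ y.2.1 ∈ P ∧ y.2.2 ∈ P ∧
        y.2.1 ≠ y.2.2 ∧ ¬ Col y.2.1 y.2.2 y.1} := ⟨hq1, hp, hq2, w1, w2⟩
    have hle := hminim _ hmem2
    simp only at hle
    linarith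
  rcases pig (dotp (a - p) (b - a)) (dotp (b - p) (b - a)) (dotp (c - p) (b - a)) with
    h | h | h | h | h | h
  · exact step a b ha hb (col_aba a b) (col_abb a b) hab h.1 h.2
  · exact step b a hb ha (col_abb a b) (col_aba a b) hab.symm h.1 h.2
  · exact step a c ha hc (col_aba a b) hcol (Ne.symm hca) h.1 h.2
  · exact step c a hc ha hcol (col_aba a b) hca h.1 h.2
  · exact step b c hb hc (col_abb a b) hcol (Ne.symm hcb) h.1 h.2
  · exact step c b hc hb hcol (col_abb a b) hcb h.1 h.2
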